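/- arXiv:2309.04431 — 6 statements merged into one kernel-verified Lean document; each statement's English description precedes it below -/
import Mathlib

section
/- Let q be a prime power and m ≥ 1, and let F_{j,i} : 𝔽_{q^m}^{s_j} → 𝔽_{q^m}^{t_i} be linear maps induced by fixed matrices over 𝔽_q (1 ≤ i, j ≤ n). Suppose C = C₁ × ⋯ × Cₙ is unambiguous with |C_i| = q^{m α_i}. Then for every non-empty I ⊆ {1,…,n} and every j ∈ I: Σ_{i∈I} α_i ≤ rank(F_{I,j}) − rank(F_{I∖{j},j}) + Σ_{k∈I, k≠j} s_k, where F_{I,j} is the block matrix stacking F_{i,j} for i ∈ I. -/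
open Module Submodule Matrix

/-- K-linearly independent families of vectors in `K^n` stay independent over an
extension field `L`. -/
theorem li_map_algebraMap {K L : Type*} [Field K] [Field L] [Algebra K L]
    {ι κ : Type*} {v : ι → κ → K} (hv : LinearIndependent K v) :
    LinearIndependent L (fun i => (algebraMap K L) ∘ v i) := by
  classical
  rw [linearIndependent_iff'] at hv ⊢
  intro sFin g hsum i hi
  set b := Basis.ofVectorSpace K L with hb
  have hrep : ∀ c, b.repr (g i) c = 0 := by
    intro c
    refine hv sFin (fun i' => b.repr (g i') c) ?_ i hi
    funext x
    have h1 : ∑ i' ∈ sFin, (v i' x) • (g i') = 0 := by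
      have h0 := congrFun hsum x
      simp only [Finset.sum_apply, Pi.smul_apply, Pi.zero_apply, Function.comp_apply,
        smul_eq_mul] at h0
      simpa [Algebra.smul_def, mul_comm] using h0
    have h2 : ∑ i' ∈ sFin, (v i' x) * b.repr (g i') c = 0 := by
      have h3 := congrArg (fun l => b.repr l c) h1
      simpa [map_sum, Finset.sum_apply, Finsupp.smul_apply, smul_eq_mul] using h3
    simpa [Finset.sum_apply, smul_eq_mul, mul_comm] using h2
  have : b.repr (g i) = 0 := Finsupp.ext hrep
  exact b.repr.map_eq_zero_iff.mp this

/-- Matrix rank is invariant under extension of scalars by a field extension. -/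
theorem rank_map_algebraMap' {K L : Type*} [Field K] [Field L] [Algebra K L]
    {m' n' : Type*} [Fintype m'] [Fintype n'] (M : Matrix m' n' K) :
    (M.map (algebraMap K L)).rank = M.rank := by
  classical
  set f := algebraMap K L with hf
  obtain ⟨S, hSsub, hSspan, hSli⟩ := exists_linearIndependent K (Set.range M)
  have hSfin : S.Finite := (Set.finite_range M).subset hSsub
  haveI := hSfin.fintype
  have hMrank : M.rank = Fintype.card S := by
    rw [Matrix.rank_eq_finrank_span_row, Matrix.row, ← hSspan, finrank_span_set_eq_card hSli,
      Set.toFinset_card]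
  have hli2 : LinearIndependent L (fun p : S => f ∘ (p : n' → K)) :=
    li_map_algebraMap hSli
  have key : span L (Set.range (M.map f)) =
      span L (Set.range fun p : S => f ∘ (p : n' → K)) := by
    apply le_antisymm
    · rw [Submodule.span_le]
      rintro _ ⟨i, rfl⟩
      have hMi : M i ∈ span K S := by
        rw [hSspan]; exact subset_span ⟨i, rfl⟩
      have hgen : ∀ v ∈ span K S,
          (f ∘ v : n' → L) ∈ span L (Set.range fun p : S => f ∘ (p : n' → K)) := by
        intro v hv
        induction hv using Submodule.span_induction with
        | mem x hx => exact subset_span ⟨⟨x, hx⟩, rfl⟩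
        | zero =>
            have : (f ∘ (0 : n' → K) : n' → L) = 0 := by
              funext c; simp
            rw [this]; exact zero_mem _
        | add x y hx hy ihx ihy =>
            have : (f ∘ (x + y) : n' → L) = (f ∘ x) + (f ∘ y) := by
              funext c; simp
            rw [this]; exact add_mem ihx ihy
        | smul a x hx ihx =>
            have : (f ∘ (a • x) : n' → L) = f a • (f ∘ x) := by
              funext c; simp [Algebra.smul_def]
            rw [this]; exact smul_mem _ _ ihx
      exact hgen (M i) hMi
    · rw [Submodule.span_le]
      rintro _ ⟨p, rfl⟩
      obtain ⟨i, hi⟩ := hSsub p.2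
      have : (f ∘ (p : n' → K) : n' → L) = (M.map f) i := by
        funext c; simp [← hi, Matrix.map_apply]
      show (f ∘ (p : n' → K) : n' → L) ∈ _
      rw [this]
      exact subset_span ⟨i, rfl⟩
  rw [Matrix.rank_eq_finrank_span_row, Matrix.row, key, finrank_span_eq_card hli2, hMrank]

/-- The matrix `F_{S,j}` obtained by stacking the blocks `F_{i,j}` for `i ∈ S`. -/
def stackedBlock {K : Type*} [Field K] {n : ℕ} {s t : Fin n → ℕ}
    (F : ∀ i j : Fin n, Matrix (Fin (s i)) (Fin (t j)) K)
    (S : Finset (Fin n)) (j : Fin n) :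
    Matrix ((i : {x : Fin n // x ∈ S}) × Fin (s i.1)) (Fin (t j)) K :=
  Matrix.of fun p c => F p.1.1 j p.2 c

section auxhelpers

variable {K L : Type*} [Field K] [Field L] [Algebra K L]
  {n : ℕ} {s t : Fin n → ℕ}
  (F : ∀ i j : Fin n, Matrix (Fin (s i)) (Fin (t j)) K)

theorem stacked_vecMul (S : Finset (Fin n)) (j : Fin n)
    (y : ((i : {x : Fin n // x ∈ S}) × Fin (s i.1)) → L) :
    y ᵥ* ((stackedBlock F S j).map (algebraMap K L)) =
      ∑ i ∈ S.attach, (fun r => y ⟨i, r⟩) ᵥ* ((F i.1 j).map (algebraMap K L)) := by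
  funext c
  simp only [Matrix.vecMul, dotProduct, Finset.sum_apply, stackedBlock,
    Matrix.map_apply, Matrix.of_apply]
  rw [← Finset.univ_sigma_univ, Finset.sum_sigma, Finset.univ_eq_attach]

/-- The `k`-th summand `x_k · F_{k,j}` (for `k ∈ I`), else `0`. -/
noncomputable def blockG (I : Finset (Fin n)) (j : Fin n)
    (x : ∀ i : {x : Fin n // x ∈ I}, Fin (s i.1) → L) (k : Fin n) : Fin (t j) → L :=
  if h : k ∈ I then (x ⟨k, h⟩) ᵥ* ((F k j).map (algebraMap K L)) else 0

/-- Uncurrying of a tuple of codewords. -/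
def uncurryI (I : Finset (Fin n)) (x : ∀ i : {x : Fin n // x ∈ I}, Fin (s i.1) → L) :
    ((i : {x : Fin n // x ∈ I}) × Fin (s i.1)) → L := fun p => x p.1 p.2

/-- Restriction of a tuple of codewords to `I.erase j` (uncurried). -/
def restrE (I : Finset (Fin n)) (j : Fin n)
    (x : ∀ i : {x : Fin n // x ∈ I}, Fin (s i.1) → L) :
    ((i : {x : Fin n // x ∈ I.erase j}) × Fin (s i.1)) → L :=
  fun p => x ⟨p.1.1, Finset.mem_of_mem_erase p.1.2⟩ p.2

theorem uncurry_vecMul_eq (I : Finset (Fin n)) (j : Fin n)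
    (x : ∀ i : {x : Fin n // x ∈ I}, Fin (s i.1) → L) :
    (uncurryI I x) ᵥ* ((stackedBlock F I j).map (algebraMap K L)) =
      ∑ k ∈ I, blockG F I j x k := by
  rw [stacked_vecMul, ← Finset.sum_attach I (blockG F I j x)]
  refine Finset.sum_congr rfl fun i _ => ?_
  rw [blockG, dif_pos i.2]
  rfl

theorem restr_vecMul_eq (I : Finset (Fin n)) (j : Fin n)
    (x : ∀ i : {x : Fin n // x ∈ I}, Fin (s i.1) → L) :
    (restrE I j x) ᵥ* ((stackedBlock F (I.erase j) j).map (algebraMap K L)) =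
      ∑ k ∈ I.erase j, blockG F I j x k := by
  rw [stacked_vecMul, ← Finset.sum_attach (I.erase j) (blockG F I j x)]
  refine Finset.sum_congr rfl fun i _ => ?_
  rw [blockG, dif_pos (Finset.mem_of_mem_erase i.2)]
  rfl

end auxhelpers

/-- outer bound: for an unambiguous `m`-code `C` over `𝔽_{q^m}` for a
`q`-LMUC with 𝔽_q-blocks `F_{i,j}`, for every non-empty `I` and every `j ∈ I`,
`Π_{i∈I} |C_i| · (q^m)^{rank F_{I∖{j},j}} ≤ (q^m)^{rank F_{I,j} + Σ_{k∈I,k≠j} s_k}`,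
i.e. `Σ_{i∈I} α_i ≤ rank F_{I,j} − rank F_{I∖{j},j} + Σ_{k∈I,k≠j} s_k`. -/
theorem stmt7 {p e : ℕ} (hp : p.Prime) (he : 0 < e)
    {K : Type*} [Field K] [Fintype K] (hq : Fintype.card K = p ^ e)
    {L : Type*} [Field L] [Fintype L] [Algebra K L]
    {m : ℕ} (hm : 0 < m) (hL : Fintype.card L = Fintype.card K ^ m)
    {n : ℕ} {s t : Fin n → ℕ}
    (F : ∀ i j : Fin n, Matrix (Fin (s i)) (Fin (t j)) K)
    (C : ∀ i, Set (Fin (s i) → L)) (hCne : ∀ i, (C i).Nonempty)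
    (hunamb : ∀ i : Fin n, ∀ x ∈ C i, ∀ x' ∈ C i, x ≠ x' →
      Disjoint
        {w : Fin (t i) → L | ∃ c : ∀ k, Fin (s k) → L, (∀ k, k ≠ i → c k ∈ C k) ∧
          w = Matrix.vecMul x ((F i i).map (algebraMap K L)) +
            ∑ k ∈ Finset.univ.erase i,
              Matrix.vecMul (c k) ((F k i).map (algebraMap K L))}
        {w : Fin (t i) → L | ∃ c : ∀ k, Fin (s k) → L, (∀ k, k ≠ i → c k ∈ C k) ∧
          w = Matrix.vecMul x' ((F i i).map (algebraMap K L)) +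
            ∑ k ∈ Finset.univ.erase i,
              Matrix.vecMul (c k) ((F k i).map (algebraMap K L))}) :
    ∀ I : Finset (Fin n), I.Nonempty → ∀ j ∈ I,
      (∏ i ∈ I, (C i).ncard) *
          Fintype.card L ^ (stackedBlock F (I.erase j) j).rank ≤
        Fintype.card L ^ ((stackedBlock F I j).rank + ∑ k ∈ I.erase j, s k) := by
  classical
  intro I _hI j hj
  -- the linear maps given by the stacked matrices (over `L`)
  let φI := ((stackedBlock F I j).map (algebraMap K L)).vecMulLinear
  let φE := ((stackedBlock F (I.erase j) j).map (algebraMap K L)).vecMulLinear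
  -- the product code
  let D : Set (∀ i : {x : Fin n // x ∈ I}, Fin (s i.1) → L) := {x | ∀ i, x i ∈ C i.1}
  -- counting the product code
  have hD : Nat.card D = ∏ i ∈ I, (C i).ncard := by
    have e : D ≃ ∀ i : {x : Fin n // x ∈ I}, {y // y ∈ C i.1} :=
      { toFun := fun x i => ⟨x.1 i, x.2 i⟩
        invFun := fun g => ⟨fun i => (g i).1, fun i => (g i).2⟩
        left_inv := fun x => rfl
        right_inv := fun g => rfl }
    rw [Nat.card_congr e, Nat.card_pi, Finset.univ_eq_attach,
      ← Finset.prod_attach I (fun k => (C k).ncard)]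
    exact Finset.prod_congr rfl fun i _ => Nat.card_coe_set_eq _
  -- decomposition of the stacked product
  have hsplitI : ∀ y : (∀ i : {x : Fin n // x ∈ I}, Fin (s i.1) → L),
      (uncurryI I y) ᵥ* ((stackedBlock F I j).map (algebraMap K L)) =
        blockG F I j y j +
          (restrE I j y) ᵥ* ((stackedBlock F (I.erase j) j).map (algebraMap K L)) := by
    intro y
    rw [uncurry_vecMul_eq, restr_vecMul_eq, ← Finset.add_sum_erase I (blockG F I j y) hj]
  -- the injection
  have key : Nat.card D ≤
      Nat.card (↥(LinearMap.range φI) × ↥(LinearMap.ker φE)) := by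
    have hσ : ∀ z : Fin (t j) → L, (h : ∃ y, φE y = z) →
        φE (if h : ∃ y, φE y = z then h.choose else 0) = z := by
      intro z h
      rw [dif_pos h]
      exact h.choose_spec
    apply Nat.card_le_card_of_injective (fun x : D =>
      ((⟨φI (uncurryI I x.1), LinearMap.mem_range_self _ _⟩ : ↥(LinearMap.range φI)),
       (⟨restrE I j x.1 -
          (if h : ∃ y, φE y = φE (restrE I j x.1) then h.choose else 0), by
            rw [LinearMap.mem_ker, map_sub, hσ _ ⟨_, rfl⟩, sub_self]⟩ :
          ↥(LinearMap.ker φE))))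
    intro x x' hxx'
    have h1 : φI (uncurryI I x.1) = φI (uncurryI I x'.1) :=
      congrArg (fun z => (z.1 : Fin (t j) → L)) hxx'
    have h2 : restrE I j x.1 -
          (if h : ∃ y, φE y = φE (restrE I j x.1) then h.choose else 0) =
        restrE I j x'.1 -
          (if h : ∃ y, φE y = φE (restrE I j x'.1) then h.choose else 0) :=
      congrArg (fun z => (z.2 : ((i : {x : Fin n // x ∈ I.erase j}) × Fin (s i.1)) → L)) hxx'
    have h1' : (uncurryI I x.1) ᵥ* ((stackedBlock F I j).map (algebraMap K L)) =
        (uncurryI I x'.1) ᵥ* ((stackedBlock F I j).map (algebraMap K L)) := h1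
    -- first, the `j`-components agree
    have hXj : x.1 ⟨j, hj⟩ = x'.1 ⟨j, hj⟩ := by
      by_contra hne
      have hd := hunamb j _ (x.2 ⟨j, hj⟩) _ (x'.2 ⟨j, hj⟩) hne
      have hsub : I.erase j ⊆ Finset.univ.erase j :=
        Finset.erase_subset_erase _ (Finset.subset_univ I)
      -- interference from outside `I`
      set Z : Fin (t j) → L := ∑ k ∈ (Finset.univ.erase j) \ (I.erase j),
        ((hCne k).choose) ᵥ* ((F k j).map (algebraMap K L)) with hZ
      have hwgen : ∀ y : (∀ i : {x : Fin n // x ∈ I}, Fin (s i.1) → L),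
          Matrix.vecMul (y ⟨j, hj⟩) ((F j j).map (algebraMap K L)) +
            ∑ k ∈ Finset.univ.erase j,
              Matrix.vecMul ((fun k => if h : k ∈ I then y ⟨k, h⟩ else (hCne k).choose) k)
                ((F k j).map (algebraMap K L)) =
          (uncurryI I y) ᵥ* ((stackedBlock F I j).map (algebraMap K L)) + Z := by
        intro y
        rw [hsplitI y, restr_vecMul_eq, ← Finset.sum_sdiff hsub]
        have hA : ∑ k ∈ (Finset.univ.erase j) \ (I.erase j),
            Matrix.vecMul (if h : k ∈ I then y ⟨k, h⟩ else (hCne k).choose)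
              ((F k j).map (algebraMap K L)) = Z := by
          refine Finset.sum_congr rfl fun k hk => ?_
          obtain ⟨hk1, hk2⟩ := Finset.mem_sdiff.mp hk
          have hkj : k ≠ j := (Finset.mem_erase.mp hk1).1
          have hkI : k ∉ I := fun h => hk2 (Finset.mem_erase.mpr ⟨hkj, h⟩)
          rw [dif_neg hkI]
        have hB : ∑ k ∈ I.erase j,
            Matrix.vecMul (if h : k ∈ I then y ⟨k, h⟩ else (hCne k).choose)
              ((F k j).map (algebraMap K L)) = ∑ k ∈ I.erase j, blockG F I j y k := by
          refine Finset.sum_congr rfl fun k hk => ?_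
          have hkI : k ∈ I := Finset.mem_of_mem_erase hk
          rw [dif_pos hkI, blockG, dif_pos hkI]
        rw [hA, hB]
        have hGj : blockG F I j y j =
            Matrix.vecMul (y ⟨j, hj⟩) ((F j j).map (algebraMap K L)) := by
          rw [blockG, dif_pos hj]
        rw [hGj]
        ring
      have hmem1 : (uncurryI I x.1) ᵥ* ((stackedBlock F I j).map (algebraMap K L)) + Z ∈
          {w : Fin (t j) → L | ∃ c : ∀ k, Fin (s k) → L, (∀ k, k ≠ j → c k ∈ C k) ∧
            w = Matrix.vecMul (x.1 ⟨j, hj⟩) ((F j j).map (algebraMap K L)) +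
              ∑ k ∈ Finset.univ.erase j,
                Matrix.vecMul (c k) ((F k j).map (algebraMap K L))} := by
        refine ⟨fun k => if h : k ∈ I then x.1 ⟨k, h⟩ else (hCne k).choose, fun k _ => ?_,
          (hwgen x.1).symm⟩
        by_cases h : k ∈ I
        · simp only [dif_pos h]; exact x.2 ⟨k, h⟩
        · simp only [dif_neg h]; exact (hCne k).choose_spec
      have hmem2 : (uncurryI I x.1) ᵥ* ((stackedBlock F I j).map (algebraMap K L)) + Z ∈
          {w : Fin (t j) → L | ∃ c : ∀ k, Fin (s k) → L, (∀ k, k ≠ j → c k ∈ C k) ∧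
            w = Matrix.vecMul (x'.1 ⟨j, hj⟩) ((F j j).map (algebraMap K L)) +
              ∑ k ∈ Finset.univ.erase j,
                Matrix.vecMul (c k) ((F k j).map (algebraMap K L))} := by
        refine ⟨fun k => if h : k ∈ I then x'.1 ⟨k, h⟩ else (hCne k).choose, fun k _ => ?_, ?_⟩
        · by_cases h : k ∈ I
          · simp only [dif_pos h]; exact x'.2 ⟨k, h⟩
          · simp only [dif_neg h]; exact (hCne k).choose_spec
        · rw [hwgen x'.1, h1']
      exact Set.disjoint_left.mp hd hmem1 hmem2
    -- next, the remaining components agree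
    have hGj : blockG F I j x.1 j = blockG F I j x'.1 j := by
      rw [blockG, blockG, dif_pos hj, dif_pos hj, hXj]
    have hEeq : (restrE I j x.1) ᵥ*
          ((stackedBlock F (I.erase j) j).map (algebraMap K L)) =
        (restrE I j x'.1) ᵥ* ((stackedBlock F (I.erase j) j).map (algebraMap K L)) := by
      rw [hsplitI, hsplitI, hGj] at h1'
      exact add_left_cancel h1'
    have hφEeq : φE (restrE I j x.1) = φE (restrE I j x'.1) := hEeq
    rw [hφEeq] at h2
    have hrestr : restrE I j x.1 = restrE I j x'.1 := by
      exact sub_left_inj.mp h2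
    apply Subtype.ext
    funext i
    by_cases hij : (i : Fin n) = j
    · have hi : i = ⟨j, hj⟩ := Subtype.ext hij
      rw [hi]; exact hXj
    · have hiE : (i : Fin n) ∈ I.erase j := Finset.mem_erase.mpr ⟨hij, i.2⟩
      funext r
      exact congrFun hrestr ⟨⟨i.1, hiE⟩, r⟩
  -- counting
  rw [Nat.card_prod] at key
  have hrI : Nat.card ↥(LinearMap.range φI) =
      Fintype.card L ^ (stackedBlock F I j).rank := by
    haveI : Fintype ↥(LinearMap.range φI) := Fintype.ofFinite _
    rw [Nat.card_eq_fintype_card, card_eq_pow_finrank (K := L)]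
    congr 1
    show finrank L ↥(LinearMap.range φI) = _
    rw [range_vecMulLinear, ← Matrix.rank_eq_finrank_span_row, rank_map_algebraMap']
  have hkE1 : finrank L ↥(LinearMap.range φE) = (stackedBlock F (I.erase j) j).rank := by
    rw [range_vecMulLinear, ← Matrix.rank_eq_finrank_span_row, rank_map_algebraMap']
  have hrn : (stackedBlock F (I.erase j) j).rank + finrank L ↥(LinearMap.ker φE) =
      ∑ k ∈ I.erase j, s k := by
    have h := LinearMap.finrank_range_add_finrank_ker φE
    rw [hkE1] at h
    rw [h, Module.finrank_pi, Fintype.card_sigma, Finset.univ_eq_attach]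
    rw [← Finset.sum_attach (I.erase j) (fun k => s k)]
    exact Finset.sum_congr rfl fun i _ => Fintype.card_fin _
  have hkE : Nat.card ↥(LinearMap.ker φE) =
      Fintype.card L ^ finrank L ↥(LinearMap.ker φE) := by
    haveI : Fintype ↥(LinearMap.ker φE) := Fintype.ofFinite _
    rw [Nat.card_eq_fintype_card, card_eq_pow_finrank (K := L)]
  rw [hrI, hkE] at key
  calc (∏ i ∈ I, (C i).ncard) * Fintype.card L ^ (stackedBlock F (I.erase j) j).rank
      = Nat.card D * Fintype.card L ^ (stackedBlock F (I.erase j) j).rank := by rw [hD]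
    _ ≤ (Fintype.card L ^ (stackedBlock F I j).rank *
          Fintype.card L ^ finrank L ↥(LinearMap.ker φE)) *
          Fintype.card L ^ (stackedBlock F (I.erase j) j).rank :=
        Nat.mul_le_mul_right _ key
    _ = Fintype.card L ^ ((stackedBlock F I j).rank + ∑ k ∈ I.erase j, s k) := by
        rw [← pow_add, ← pow_add, ← hrn]
        congr 1
        omega
end

section
/- Let q be an odd prime power. For the q-LMUC with n = 2, s = (1,2), t = (1,2) and transfer matrix F = [[1,1,1],[1,1,0],[1,0,1]] (so F_{1,1} = (1), F_{1,2} = (1,1), F_{2,1} = (1,1)^T, F_{2,2} = identity on 𝔽_q^2), the 1-code C = 𝔽_q × span{(1,−1)} is unambiguous; hence the rate (1,1) is achievable in one shot. -/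
lemma two_ne_zero_of_odd_card {K : Type*} [Field K] [Fintype K]
    (hodd : Odd (Fintype.card K)) : (2 : K) ≠ 0 := by
  intro h2
  haveI : CharP K 2 := by
    have := CharP.charP_iff_prime_eq_zero (R := K) (p := 2) Nat.prime_two
    exact this.mpr (by exact_mod_cast h2)
  have hr : ringChar K = 2 := by
    have := ringChar.eq K 2
    omega
  have := FiniteField.even_card_of_char_two (F := K) hr
  rw [Nat.odd_iff] at hodd
  omega

/-- for odd `q`, the 1-code `C = 𝔽_q × span{(1,−1)}` is unambiguous for
the LMUC with transfer matrix `[[1,1,1],[1,1,0],[1,0,1]]`: the fan-out sets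
`Fan₁(x) = {x + c₁ + c₂ : c ∈ C₂}` are pairwise disjoint over `x ∈ 𝔽_q`, and the
fan-out sets `Fan₂(c) = {(x,x) + c : x ∈ 𝔽_q}` are pairwise disjoint over `c ∈ C₂`. -/
theorem stmt9 {K : Type*} [Field K] [Fintype K] (hodd : Odd (Fintype.card K)) :
    (∀ x x' : K, x ≠ x' →
      Disjoint
        {w : K | ∃ c ∈ (Submodule.span K {((1 : K), (-1 : K))} : Submodule K (K × K)),
          w = x + c.1 + c.2}
        {w : K | ∃ c ∈ (Submodule.span K {((1 : K), (-1 : K))} : Submodule K (K × K)),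
          w = x' + c.1 + c.2}) ∧
    (∀ c ∈ (Submodule.span K {((1 : K), (-1 : K))} : Submodule K (K × K)),
      ∀ c' ∈ (Submodule.span K {((1 : K), (-1 : K))} : Submodule K (K × K)), c ≠ c' →
      Disjoint {w : K × K | ∃ x : K, w = (x, x) + c}
        {w : K × K | ∃ x : K, w = (x, x) + c'}) := by
  have h2 : (2 : K) ≠ 0 := two_ne_zero_of_odd_card hodd
  constructor
  · intro x x' hxx
    rw [Set.disjoint_left]
    rintro w ⟨c, hc, rfl⟩ ⟨c', hc', he⟩
    obtain ⟨a, rfl⟩ := Submodule.mem_span_singleton.mp hc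
    obtain ⟨a', rfl⟩ := Submodule.mem_span_singleton.mp hc'
    simp only [Prod.smul_mk, smul_eq_mul, mul_one, mul_neg] at he
    apply hxx
    linear_combination he
  · intro c hc c' hc' hne
    obtain ⟨a, rfl⟩ := Submodule.mem_span_singleton.mp hc
    obtain ⟨a', rfl⟩ := Submodule.mem_span_singleton.mp hc'
    rw [Set.disjoint_left]
    rintro w ⟨x, rfl⟩ ⟨x', he⟩
    apply hne
    simp only [Prod.smul_mk, smul_eq_mul, mul_one, mul_neg, Prod.mk_add_mk, Prod.mk.injEq] at he ⊢
    obtain ⟨h1, h2'⟩ := he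
    have ha : a = a' := by
      have : 2 * a = 2 * a' := by ring_nf; linear_combination h1 - h2'
      exact mul_left_cancel₀ h2 this
    simp [ha]
end

section
/- Let q be a power of 2 and m ≥ 1. For the q-LMUC with transfer matrix F = [[1,1,1],[1,1,0],[1,0,1]] over 𝔽_{q}, every unambiguous m-code C = C₁ × C₂ (C₁ ⊆ 𝔽_{q^m}, C₂ ⊆ 𝔽_{q^m}²) satisfies |C₂| ≤ (q^m / |C₁|)², i.e., |C₁|² · |C₂| ≤ q^{2m}. -/
lemma my_ncard_prod {α β : Type*} (s : Set α) (t : Set β) :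
    (s ×ˢ t).ncard = s.ncard * t.ncard := by
  rw [← Nat.card_coe_set_eq, ← Nat.card_coe_set_eq s, ← Nat.card_coe_set_eq t,
    Nat.card_congr (Equiv.Set.prod s t), Nat.card_prod]

/-- for `q` a power of 2 and the LMUC with transfer matrix
`[[1,1,1],[1,1,0],[1,0,1]]` over `𝔽_{q^m}`, every unambiguous `m`-code `C₁ × C₂`
satisfies `|C₁|² · |C₂| ≤ q^{2m}`. -/
theorem stmt10 {q e m : ℕ} (he : 0 < e) (hq : q = 2 ^ e) (hm : 0 < m)
    {L : Type*} [Field L] [Fintype L] (hL : Fintype.card L = q ^ m)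
    (C1 : Set L) (C2 : Set (L × L))
    (h1 : ∀ x ∈ C1, ∀ x' ∈ C1, x ≠ x' →
      Disjoint {w : L | ∃ c ∈ C2, w = x + c.1 + c.2}
        {w : L | ∃ c ∈ C2, w = x' + c.1 + c.2})
    (h2 : ∀ c ∈ C2, ∀ c' ∈ C2, c ≠ c' →
      Disjoint {w : L × L | ∃ x ∈ C1, w = (x, x) + c}
        {w : L × L | ∃ x ∈ C1, w = (x, x) + c'}) :
    C1.ncard ^ 2 * C2.ncard ≤ q ^ (2 * m) := by
  classical
  -- the characteristic of L is 2
  have hcard : Fintype.card L = 2 ^ (e * m) := by rw [hL, hq, ← pow_mul]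
  obtain ⟨n, hp, hn⟩ := FiniteField.card L (ringChar L)
  have hchar2 : ringChar L = 2 := by
    have hdvd : ringChar L ∣ 2 ^ (e * m) := by
      rw [← hcard, hn]
      exact dvd_pow_self _ n.pos.ne'
    exact (Nat.prime_dvd_prime_iff_eq hp Nat.prime_two).mp (hp.dvd_of_dvd_pow hdvd)
  haveI : CharP L 2 := hchar2 ▸ ringChar.charP L
  have hself : ∀ a : L, a + a = 0 := fun a => CharTwo.add_self_eq_zero a
  -- the injection
  set f : (L × L) × (L × L) → L × L :=
    fun p => (p.1.1 + p.2.1 + p.2.2, p.1.2 + p.2.1) with hf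
  set s : Set ((L × L) × (L × L)) := (C1 ×ˢ C1) ×ˢ C2 with hs
  have hinj : Set.InjOn f s := by
    rintro ⟨⟨x, x'⟩, c⟩ ⟨⟨hx, hx'⟩, hc⟩ ⟨⟨z, z'⟩, d⟩ ⟨⟨hz, hz'⟩, hd⟩ heq
    simp only [hf, Prod.mk.injEq] at heq
    obtain ⟨h1eq, h2eq⟩ := heq
    have hxz : x = z := by
      by_contra hne
      exact Set.disjoint_left.mp (h1 x hx z hz hne) ⟨c, hc, rfl⟩ ⟨d, hd, h1eq⟩
    subst hxz
    have hsum : c.1 + c.2 = d.1 + d.2 := by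
      have := h1eq
      rw [add_assoc, add_assoc] at this
      exact add_left_cancel this
    have hcd : c = d := by
      by_contra hne
      have h2' : x' + c.2 = z' + d.2 := by
        have hA := hself c.1
        have hB := hself d.1
        linear_combination h2eq + hsum - hA + hB
      have hw : ((x', x') + c : L × L) = (z', z') + d := by
        simp only [Prod.ext_iff, Prod.fst_add, Prod.snd_add]
        exact ⟨h2eq, h2'⟩
      have hmem1 : ((x', x') + c : L × L) ∈ {w : L × L | ∃ a ∈ C1, w = (a, a) + c} :=
        ⟨x', hx', rfl⟩
      have hmem2 : ((x', x') + c : L × L) ∈ {w : L × L | ∃ a ∈ C1, w = (a, a) + d} :=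
        ⟨z', hz', hw⟩
      exact Set.disjoint_left.mp (h2 c hc d hd hne) hmem1 hmem2
    subst hcd
    have : x' = z' := add_right_cancel h2eq
    subst this
    rfl
  have hmaps : Set.MapsTo f s (Set.univ : Set (L × L)) := fun _ _ => trivial
  have hle : s.ncard ≤ (Set.univ : Set (L × L)).ncard :=
    Set.ncard_le_ncard_of_injOn f hmaps hinj (Set.finite_univ)
  have hsncard : s.ncard = C1.ncard ^ 2 * C2.ncard := by
    rw [hs, my_ncard_prod, my_ncard_prod, sq]
  have huniv : (Set.univ : Set (L × L)).ncard = q ^ (2 * m) := by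
    rw [Set.ncard_univ, Nat.card_eq_fintype_card, Fintype.card_prod, hL, ← pow_add,
      two_mul]
  rw [hsncard, huniv] at hle
  exact hle
end

section
/- Let q be a power of 2, m ≥ 1, and n ≤ m. For the 2-user LMUC over 𝔽_{2^m} with transfer matrix F = [[1,1,1],[1,1,0],[1,0,1]], choose an 𝔽₂-basis {x₁,…,x_m} of 𝔽_{2^m}, and set C₁ = span_{𝔽₂}{x₁,…,x_n} and C₂ = span_{𝔽₂}{(x_i,0),(0,x_i) : n+1 ≤ i ≤ m}. Then C₁ × C₂ is unambiguous; in particular IS₁(C) = span_{𝔽₂}{x_{n+1},…,x_m} satisfies C₁ ∩ IS₁(C) = {0} and IS₂(C) = span_{𝔽₂}{(x_i,x_i) : 1 ≤ i ≤ n} satisfies C₂ ∩ IS₂(C) = {0}. -/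
/-- over `𝔽_{2^m}` with an `𝔽₂`-basis `x₁,…,x_m`, taking
`C₁ = span_{𝔽₂}{x_i : i < n}` and `C₂ = span_{𝔽₂}{(x_i,0),(0,x_i) : i ≥ n}`, the code
`C₁ × C₂` is unambiguous for the LMUC with transfer matrix `[[1,1,1],[1,1,0],[1,0,1]]`;
moreover `IS₁(C) = span_{𝔽₂}{x_i : i ≥ n}` with `C₁ ∩ IS₁(C) = {0}` and
`IS₂(C) = span_{𝔽₂}{(x_i,x_i) : i < n}` with `C₂ ∩ IS₂(C) = {0}`. -/
theorem stmt11 {m n : ℕ} (hnm : n ≤ m)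
    {L : Type*} [Field L] [Fintype L] [Algebra (ZMod 2) L]
    (hL : Fintype.card L = 2 ^ m) (b : Module.Basis (Fin m) (ZMod 2) L)
    (C1 : Set L)
    (hC1 : C1 = (Submodule.span (ZMod 2)
      {y : L | ∃ i : Fin m, (i : ℕ) < n ∧ y = b i} : Submodule (ZMod 2) L))
    (C2 : Set (L × L))
    (hC2 : C2 = (Submodule.span (ZMod 2)
      {y : L × L | ∃ i : Fin m, n ≤ (i : ℕ) ∧ (y = (b i, 0) ∨ y = (0, b i))} :
        Submodule (ZMod 2) (L × L))) :
    (∀ x ∈ C1, ∀ x' ∈ C1, x ≠ x' →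
      Disjoint {w : L | ∃ c ∈ C2, w = x + c.1 + c.2}
        {w : L | ∃ c ∈ C2, w = x' + c.1 + c.2}) ∧
    (∀ c ∈ C2, ∀ c' ∈ C2, c ≠ c' →
      Disjoint {w : L × L | ∃ x ∈ C1, w = (x, x) + c}
        {w : L × L | ∃ x ∈ C1, w = (x, x) + c'}) ∧
    ({w : L | ∃ c ∈ C2, w = c.1 + c.2} =
      (Submodule.span (ZMod 2)
        {y : L | ∃ i : Fin m, n ≤ (i : ℕ) ∧ y = b i} : Submodule (ZMod 2) L)) ∧
    (C1 ∩ {w : L | ∃ c ∈ C2, w = c.1 + c.2} = {0}) ∧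
    ({w : L × L | ∃ x ∈ C1, w = (x, x)} =
      (Submodule.span (ZMod 2)
        {y : L × L | ∃ i : Fin m, (i : ℕ) < n ∧ y = (b i, b i)} :
          Submodule (ZMod 2) (L × L))) ∧
    (C2 ∩ {w : L × L | ∃ x ∈ C1, w = (x, x)} = {0}) := by
  classical
  set I1 : Set (Fin m) := {i | (i : ℕ) < n} with hI1
  set I2 : Set (Fin m) := {i | n ≤ (i : ℕ)} with hI2
  have hB1 : {y : L | ∃ i : Fin m, (i : ℕ) < n ∧ y = b i} = b '' I1 := by
    ext y; simp [I1, eq_comm]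
  have hB2 : {y : L | ∃ i : Fin m, n ≤ (i : ℕ) ∧ y = b i} = b '' I2 := by
    ext y; simp [I2, eq_comm]
  set S1 : Submodule (ZMod 2) L := Submodule.span (ZMod 2) (b '' I1) with hS1
  set S2 : Submodule (ZMod 2) L := Submodule.span (ZMod 2) (b '' I2) with hS2
  have hdisj : Disjoint S1 S2 :=
    b.linearIndependent.disjoint_span_image (by
      rw [Set.disjoint_left]; intro i h1 h2
      simp only [I1, I2, Set.mem_setOf_eq] at h1 h2; omega)
  have hinter : ∀ x : L, x ∈ S1 → x ∈ S2 → x = 0 := fun x h1 h2 =>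
    Submodule.disjoint_def.mp hdisj x h1 h2
  have hC1' : ∀ x : L, x ∈ C1 ↔ x ∈ S1 := by
    intro x; rw [hC1, hB1]; exact Iff.rfl
  have hC2' : ∀ c : L × L, c ∈ C2 ↔ c.1 ∈ S2 ∧ c.2 ∈ S2 := by
    intro c
    rw [hC2, SetLike.mem_coe]
    constructor
    · intro hc
      have hle : (Submodule.span (ZMod 2)
          {y : L × L | ∃ i : Fin m, n ≤ (i : ℕ) ∧ (y = (b i, 0) ∨ y = (0, b i))})
          ≤ S2.prod S2 := by
        rw [Submodule.span_le]
        rintro y ⟨i, hi, hy | hy⟩ <;> subst hy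
        · exact ⟨Submodule.subset_span ⟨i, hi, rfl⟩, Submodule.zero_mem _⟩
        · exact ⟨Submodule.zero_mem _, Submodule.subset_span ⟨i, hi, rfl⟩⟩
      exact Submodule.mem_prod.mp (hle hc)
    · rintro ⟨h1, h2⟩
      have key : ∀ u : L, u ∈ S2 →
          ((u, 0) : L × L) ∈ Submodule.span (ZMod 2)
            {y : L × L | ∃ i : Fin m, n ≤ (i : ℕ) ∧ (y = (b i, 0) ∨ y = (0, b i))} ∧
          ((0, u) : L × L) ∈ Submodule.span (ZMod 2)
            {y : L × L | ∃ i : Fin m, n ≤ (i : ℕ) ∧ (y = (b i, 0) ∨ y = (0, b i))} := by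
        intro u hu
        constructor
        · have h := Submodule.mem_map_of_mem (f := LinearMap.inl (ZMod 2) L L) hu
          rw [hS2, Submodule.map_span] at h
          refine Submodule.span_mono ?_ h
          rintro y ⟨z, ⟨i, hi, rfl⟩, rfl⟩
          exact ⟨i, hi, Or.inl rfl⟩
        · have h := Submodule.mem_map_of_mem (f := LinearMap.inr (ZMod 2) L L) hu
          rw [hS2, Submodule.map_span] at h
          refine Submodule.span_mono ?_ h
          rintro y ⟨z, ⟨i, hi, rfl⟩, rfl⟩
          exact ⟨i, hi, Or.inr rfl⟩
      have hc : c = (c.1, 0) + (0, c.2) := by simp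
      rw [hc]
      exact Submodule.add_mem _ (key c.1 h1).1 (key c.2 h2).2
  have hIS1 : {w : L | ∃ c ∈ C2, w = c.1 + c.2} = (S2 : Set L) := by
    ext w
    constructor
    · rintro ⟨c, hc, rfl⟩
      exact Submodule.add_mem _ ((hC2' c).mp hc).1 ((hC2' c).mp hc).2
    · intro hw
      exact ⟨(w, 0), (hC2' (w, 0)).mpr ⟨hw, Submodule.zero_mem _⟩, by simp⟩
  refine ⟨?_, ?_, ?_, ?_, ?_, ?_⟩
  · intro x hx x' hx' hne
    rw [Set.disjoint_left]
    rintro w ⟨c, hc, rfl⟩ ⟨c', hc', heq⟩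
    apply hne
    have hs : c.1 + c.2 ∈ S2 := Submodule.add_mem _ ((hC2' c).mp hc).1 ((hC2' c).mp hc).2
    have hs' : c'.1 + c'.2 ∈ S2 := Submodule.add_mem _ ((hC2' c').mp hc').1 ((hC2' c').mp hc').2
    have hd : x - x' = (c'.1 + c'.2) - (c.1 + c.2) := by linear_combination heq
    have h1 : x - x' ∈ S1 := Submodule.sub_mem _ ((hC1' x).mp hx) ((hC1' x').mp hx')
    have h2 : x - x' ∈ S2 := hd ▸ Submodule.sub_mem _ hs' hs
    have := hinter _ h1 h2
    exact sub_eq_zero.mp this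
  · intro c hc c' hc' hne
    rw [Set.disjoint_left]
    rintro w ⟨x, hx, rfl⟩ ⟨x', hx', heq⟩
    apply hne
    have h1 := congrArg Prod.fst heq
    simp only [Prod.fst_add] at h1
    have hd : x - x' = c'.1 - c.1 := by linear_combination h1
    have hm1 : x - x' ∈ S1 := Submodule.sub_mem _ ((hC1' x).mp hx) ((hC1' x').mp hx')
    have hm2 : x - x' ∈ S2 := hd ▸ Submodule.sub_mem _ ((hC2' c').mp hc').1 ((hC2' c).mp hc).1
    have hxx : x = x' := sub_eq_zero.mp (hinter _ hm1 hm2)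
    subst hxx
    exact add_left_cancel heq
  · rw [hB2, ← hS2]; exact hIS1
  · rw [hIS1]
    ext x
    simp only [Set.mem_inter_iff, SetLike.mem_coe, Set.mem_singleton_iff]
    constructor
    · rintro ⟨h1, h2⟩
      exact hinter x ((hC1' x).mp h1) h2
    · rintro rfl
      exact ⟨(hC1' 0).mpr (Submodule.zero_mem _), Submodule.zero_mem _⟩
  · have hB1' : {y : L × L | ∃ i : Fin m, (i : ℕ) < n ∧ y = (b i, b i)} =
        (fun x : L => (x, x)) '' (b '' I1) := by
      ext y
      constructor
      · rintro ⟨i, hi, rfl⟩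
        exact ⟨b i, ⟨i, hi, rfl⟩, rfl⟩
      · rintro ⟨z, ⟨i, hi, rfl⟩, rfl⟩
        exact ⟨i, hi, rfl⟩
    rw [hB1']
    have hmap : Submodule.span (ZMod 2) ((fun x : L => (x, x)) '' (b '' I1)) =
        Submodule.map (LinearMap.prod LinearMap.id LinearMap.id) S1 := by
      rw [hS1, Submodule.map_span]
      rfl
    ext w
    rw [hmap]
    simp only [Set.mem_setOf_eq, SetLike.mem_coe, Submodule.mem_map, LinearMap.prod_apply,
      LinearMap.id_coe, id_eq, Pi.prod]
    constructor
    · rintro ⟨x, hx, rfl⟩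
      exact ⟨x, (hC1' x).mp hx, rfl⟩
    · rintro ⟨x, hx, rfl⟩
      exact ⟨x, (hC1' x).mpr hx, rfl⟩
  · ext c
    simp only [Set.mem_inter_iff, Set.mem_setOf_eq, Set.mem_singleton_iff]
    constructor
    · rintro ⟨hc, x, hx, rfl⟩
      have : x = 0 := hinter x ((hC1' x).mp hx) ((hC2' _).mp hc).1
      simp [this]
    · rintro rfl
      exact ⟨(hC2' 0).mpr ⟨Submodule.zero_mem _, Submodule.zero_mem _⟩,
        0, (hC1' 0).mpr (Submodule.zero_mem _), rfl⟩
end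

section
/- Let q be a prime power, and consider any q-LMUC with n = 2, s = t = (2,2) whose blocks satisfy rank(F_{1,1}-stack over {1,2} for column 1) − rank(F_{2,1}) + s₂ = 3 and rank(stack for column 2) − rank(F_{1,2}) + s₁ = 3 (as for F = [[1,0,0,0],[0,1,1,0],[0,1,1,0],[0,0,0,1]]). Then every unambiguous m-code C = C₁ × C₂ satisfies |C₁| · |C₂| ≤ q^{3m}. -/
open Matrix Module Submodule

section RankMap

variable {F : Type*} [Field F] {m : Type*} [Fintype m]

lemma fin2_cases (l : Fin 2) : l = 0 ∨ l = 1 := by revert l; decide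

lemma aux_rank_ge_one {n : Type*} [Fintype n] (M : Matrix m n F) {i : m} {k : n}
    (h : M i k ≠ 0) : 1 ≤ M.rank := by
  rw [Nat.one_le_iff_ne_zero]
  intro h0
  rw [Matrix.rank_eq_finrank_span_row] at h0
  have : (Submodule.span F (Set.range M)) = ⊥ := Submodule.finrank_eq_zero.mp h0
  have hM : M i ∈ Submodule.span F (Set.range M) := Submodule.subset_span ⟨i, rfl⟩
  rw [this, Submodule.mem_bot] at hM
  exact h (by rw [hM]; rfl)

lemma aux_rank_le_one (M : Matrix m (Fin 2) F)
    (h : ∀ i j, M i 0 * M j 1 = M j 0 * M i 1) : M.rank ≤ 1 := by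
  by_cases h0 : M = 0
  · simp [h0, Matrix.rank_zero]
  obtain ⟨i, k, hik⟩ : ∃ i k, M i k ≠ 0 := by
    by_contra hc; push_neg at hc
    exact h0 (by ext i j; simpa using hc i j)
  rw [Matrix.rank_eq_finrank_span_cols]
  rcases fin2_cases k with rfl | rfl
  · have hc0 : Mᵀ 0 ≠ 0 := by
      intro hz; exact hik (by simpa using congrFun hz i)
    have hsub : Set.range Mᵀ ⊆ (Submodule.span F {Mᵀ 0} : Set _) := by
      rintro _ ⟨l, rfl⟩
      rcases fin2_cases l with rfl | rfl
      · exact Submodule.subset_span rfl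
      · have heq : Mᵀ 1 = (M i 1 * (M i 0)⁻¹) • Mᵀ 0 := by
          funext j
          simp only [Matrix.transpose_apply, Pi.smul_apply, smul_eq_mul]
          field_simp
          linear_combination h i j
        rw [heq]
        exact Submodule.smul_mem _ _ (Submodule.subset_span rfl)
    have hle := Submodule.finrank_mono
      (Submodule.span_le.mpr hsub : Submodule.span F (Set.range Mᵀ) ≤ Submodule.span F {Mᵀ 0})
    have h1 : finrank F (Submodule.span F ({Mᵀ 0} : Set (m → F))) = 1 :=
      finrank_span_singleton hc0
    exact hle.trans h1.le
  · have hc1 : Mᵀ 1 ≠ 0 := by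
      intro hz; exact hik (by simpa using congrFun hz i)
    have hsub : Set.range Mᵀ ⊆ (Submodule.span F {Mᵀ 1} : Set _) := by
      rintro _ ⟨l, rfl⟩
      rcases fin2_cases l with rfl | rfl
      · have heq : Mᵀ 0 = (M i 0 * (M i 1)⁻¹) • Mᵀ 1 := by
          funext j
          simp only [Matrix.transpose_apply, Pi.smul_apply, smul_eq_mul]
          field_simp
          linear_combination h j i
        rw [heq]
        exact Submodule.smul_mem _ _ (Submodule.subset_span rfl)
      · exact Submodule.subset_span rfl
    have hle := Submodule.finrank_mono
      (Submodule.span_le.mpr hsub : Submodule.span F (Set.range Mᵀ) ≤ Submodule.span F {Mᵀ 1})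
    have h1 : finrank F (Submodule.span F ({Mᵀ 1} : Set (m → F))) = 1 :=
      finrank_span_singleton hc1
    exact hle.trans h1.le

lemma aux_rank_ge_two [DecidableEq m] (M : Matrix m (Fin 2) F) {i j : m}
    (h : M i 0 * M j 1 ≠ M j 0 * M i 1) : 2 ≤ M.rank := by
  set N : Matrix (Fin 2) (Fin 2) F := M.submatrix ![i, j] id with hN
  have hmul : ((1 : Matrix m m F).submatrix ![i, j] (Equiv.refl m)) * M = N := by
    rw [Matrix.one_submatrix_mul]
    congr 1
  have hrle : N.rank ≤ M.rank := by
    rw [← hmul]; exact Matrix.rank_mul_le_right _ _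
  have hdet : N.det ≠ 0 := by
    rw [Matrix.det_fin_two]
    simp only [hN, Matrix.submatrix_apply, Matrix.cons_val_zero, Matrix.cons_val_one,
      Matrix.head_cons, id_eq]
    intro hz
    exact h (by linear_combination hz)
  have hr2 : N.rank = 2 := by
    rw [Matrix.rank_of_isUnit N (Matrix.isUnit_iff_isUnit_det N |>.mpr (isUnit_iff_ne_zero.mpr hdet))]
    simp
  omega

lemma aux_rank_map {K L : Type*} [Field K] [Field L] (f : K →+* L)
    (M : Matrix m (Fin 2) K) : (M.map f).rank = M.rank := by
  classical
  have hf : Function.Injective f := f.injective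
  have hw : M.rank ≤ 2 := by
    have := M.rank_le_card_width; simpa using this
  have hw' : (M.map f).rank ≤ 2 := by
    have := (M.map f).rank_le_card_width; simpa using this
  by_cases h0 : M = 0
  · subst h0
    rw [Matrix.rank_zero]
    have : (0 : Matrix m (Fin 2) K).map f = 0 := by ext i j; simp
    rw [this, Matrix.rank_zero]
  · obtain ⟨i0, k0, hik⟩ : ∃ i k, M i k ≠ 0 := by
      by_contra hc; push_neg at hc
      exact h0 (by ext i j; simpa using hc i j)
    have hik' : (M.map f) i0 k0 ≠ 0 := by
      simp only [Matrix.map_apply]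
      intro hz; exact hik (hf (by rw [hz, map_zero]))
    have hge1 := aux_rank_ge_one M hik
    have hge1' := aux_rank_ge_one (M.map f) hik'
    by_cases hP : ∀ i j, M i 0 * M j 1 = M j 0 * M i 1
    · have hle1 := aux_rank_le_one M hP
      have hle1' : (M.map f).rank ≤ 1 := aux_rank_le_one (M.map f) (by
        intro i j
        simp only [Matrix.map_apply, ← _root_.map_mul]
        exact congrArg f (hP i j))
      omega
    · push_neg at hP
      obtain ⟨i, j, hij⟩ := hP
      have h2 := aux_rank_ge_two M hij
      have h2' : 2 ≤ (M.map f).rank := aux_rank_ge_two (M.map f) (i := i) (j := j) (by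
        simp only [Matrix.map_apply, ← _root_.map_mul]
        exact fun hz => hij (hf hz))
      omega

lemma aux_fromRows_map {K L : Type*} [Field K] [Field L] (f : K →+* L)
    {m₁ m₂ n : Type*} (A : Matrix m₁ n K) (B : Matrix m₂ n K) :
    (Matrix.fromRows A B).map f = Matrix.fromRows (A.map f) (B.map f) := by
  ext (i | i) j <;> rfl

end RankMap

/-- for any q-LMUC with `n = 2`, `s = t = (2,2)` whose blocks satisfy
`rank(F_{{1,2},1}) − rank(F₂₁) + s₂ = 3` and `rank(F_{{1,2},2}) − rank(F₁₂) + s₁ = 3`,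
every unambiguous `m`-code `C₁ × C₂` over `𝔽_{q^m}` satisfies `|C₁|·|C₂| ≤ q^{3m}`. -/
theorem stmt14 {p e : ℕ} (hp : p.Prime) (he : 0 < e)
    {K : Type*} [Field K] [Fintype K] (hq : Fintype.card K = p ^ e)
    {L : Type*} [Field L] [Fintype L] [Algebra K L]
    {m : ℕ} (hm : 0 < m) (hL : Fintype.card L = Fintype.card K ^ m)
    (F11 F12 F21 F22 : Matrix (Fin 2) (Fin 2) K)
    (hr1 : (Matrix.fromRows F11 F21).rank + 2 = F21.rank + 3)
    (hr2 : (Matrix.fromRows F12 F22).rank + 2 = F12.rank + 3)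
    (C1 C2 : Set (Fin 2 → L))
    (h1 : ∀ x ∈ C1, ∀ x' ∈ C1, x ≠ x' →
      Disjoint
        {w : Fin 2 → L | ∃ c ∈ C2, w = Matrix.vecMul x (F11.map (algebraMap K L)) +
          Matrix.vecMul c (F21.map (algebraMap K L))}
        {w : Fin 2 → L | ∃ c ∈ C2, w = Matrix.vecMul x' (F11.map (algebraMap K L)) +
          Matrix.vecMul c (F21.map (algebraMap K L))})
    (h2 : ∀ c ∈ C2, ∀ c' ∈ C2, c ≠ c' →
      Disjoint
        {w : Fin 2 → L | ∃ x ∈ C1, w = Matrix.vecMul x (F12.map (algebraMap K L)) +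
          Matrix.vecMul c (F22.map (algebraMap K L))}
        {w : Fin 2 → L | ∃ x ∈ C1, w = Matrix.vecMul x (F12.map (algebraMap K L)) +
          Matrix.vecMul c' (F22.map (algebraMap K L))}) :
    C1.ncard * C2.ncard ≤ Fintype.card K ^ (3 * m) := by
  classical
  set f : K →+* L := algebraMap K L with hf
  set A : Matrix (Fin 2) (Fin 2) L := F11.map f with hA
  set B : Matrix (Fin 2) (Fin 2) L := F21.map f with hB
  have hC1 : C1.Finite := Set.toFinite _
  have hC2 : C2.Finite := Set.toFinite _
  set t : Finset ((Fin 2 → L) × (Fin 2 → L)) := hC1.toFinset ×ˢ hC2.toFinset with ht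
  set Θ : (Fin 2 → L) × (Fin 2 → L) → (Fin 2 → L) :=
    fun q => Matrix.vecMul q.1 A + Matrix.vecMul q.2 B with hΘ
  set W : Submodule L (Fin 2 → L) := LinearMap.range (Matrix.fromRows A B).vecMulLinear with hWdef
  set Kr : Submodule L (Fin 2 → L) := LinearMap.ker B.vecMulLinear with hKrdef
  have memt : ∀ q ∈ t, q.1 ∈ C1 ∧ q.2 ∈ C2 := by
    intro q hq
    obtain ⟨hq1, hq2⟩ := Finset.mem_product.mp hq
    exact ⟨hC1.mem_toFinset.mp hq1, hC2.mem_toFinset.mp hq2⟩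
  have key : ∀ q ∈ t, ∀ r ∈ t, Θ q = Θ r → q.1 = r.1 := by
    intro q hq r hr hqr
    by_contra hne
    have hd := h1 q.1 (memt q hq).1 r.1 (memt r hr).1 hne
    exact Set.disjoint_left.mp hd ⟨q.2, (memt q hq).2, rfl⟩ ⟨r.2, (memt r hr).2, hqr⟩
  have fiber : ∀ b ∈ t.image Θ, (t.filter (fun q => Θ q = b)).card ≤ Nat.card Kr := by
    intro b hb
    obtain ⟨q₀, hq₀, hb₀⟩ := Finset.mem_image.mp hb
    have hcard : ((t.filter (fun q => Θ q = b)) : Set ((Fin 2 → L) × (Fin 2 → L))).ncard ≤ (Kr : Set (Fin 2 → L)).ncard := by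
      apply Set.ncard_le_ncard_of_injOn (fun q => q.2 - q₀.2)
      · intro q hq
        simp only [Finset.coe_filter, Set.mem_setOf_eq] at hq
        obtain ⟨hqt, hqb⟩ := hq
        have h1q : q.1 = q₀.1 := key q hqt q₀ hq₀ (by rw [hqb, hb₀])
        have hBeq : Matrix.vecMul q.2 B = Matrix.vecMul q₀.2 B := by
          have heq : Θ q = Θ q₀ := by rw [hqb, hb₀]
          rw [hΘ] at heq
          simp only [h1q] at heq
          exact add_left_cancel heq
        have hmem : (q.2 - q₀.2) ∈ Kr := by
          rw [hKrdef, LinearMap.mem_ker, Matrix.vecMulLinear_apply, Matrix.sub_vecMul, hBeq,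
            sub_self]
        exact hmem
      · intro q hq r hr hqr
        simp only [Finset.coe_filter, Set.mem_setOf_eq] at hq hr
        have h2eq : q.2 = r.2 := by
          have h := congrArg (fun z => z + q₀.2) hqr
          simpa using h
        have h1eq : q.1 = r.1 :=
          (key q hq.1 r hr.1 (by rw [hq.2, hr.2]))
        exact Prod.ext h1eq h2eq
    rw [Set.ncard_coe_finset] at hcard
    have hKc : Nat.card ↥(Kr : Set (Fin 2 → L)) = (Kr : Set (Fin 2 → L)).ncard :=
      Nat.card_coe_set_eq _
    exact hcard.trans (le_of_eq hKc.symm)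
  have himg : (t.image Θ).card ≤ Nat.card W := by
    have hsub : ((t.image Θ) : Set (Fin 2 → L)) ⊆ (W : Set (Fin 2 → L)) := by
      intro b hb
      simp only [Finset.coe_image, Set.mem_image, Finset.mem_coe] at hb
      obtain ⟨q, hq, rfl⟩ := hb
      have hmem : Θ q ∈ W := ⟨Sum.elim q.1 q.2, by
        rw [Matrix.vecMulLinear_apply, Matrix.sumElim_vecMul_fromRows]⟩
      exact hmem
    have h := Set.ncard_le_ncard hsub (Set.toFinite _)
    rw [Set.ncard_coe_finset] at h
    have hWc : Nat.card ↥(W : Set (Fin 2 → L)) = (W : Set (Fin 2 → L)).ncard :=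
      Nat.card_coe_set_eq _
    exact h.trans (le_of_eq hWc.symm)
  have hcount : t.card ≤ Nat.card Kr * (t.image Θ).card :=
    Finset.card_le_mul_card_image t (Nat.card Kr) fiber
  -- rank computations
  have hfW : Module.finrank L W = (Matrix.fromRows A B).rank := by
    rw [hWdef, range_vecMulLinear, ← Matrix.rank_eq_finrank_span_row]
  have hrangeB : Module.finrank L (LinearMap.range B.vecMulLinear) = B.rank := by
    rw [range_vecMulLinear, ← Matrix.rank_eq_finrank_span_row]
  have hker : B.rank + Module.finrank L Kr = 2 := by
    have h := LinearMap.finrank_range_add_finrank_ker B.vecMulLinear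
    rw [hrangeB, Module.finrank_fintype_fun_eq_card] at h
    simpa using h
  have hrB : B.rank = F21.rank := by rw [hB]; exact aux_rank_map f F21
  have hrS : (Matrix.fromRows A B).rank = F21.rank + 1 := by
    rw [hA, hB, ← aux_fromRows_map f F11 F21, aux_rank_map f]
    omega
  have hsum : Module.finrank L Kr + Module.finrank L W = 3 := by
    rw [hfW, hrS]; omega
  -- cardinalities of subspaces
  haveI : Fintype W := Fintype.ofFinite _
  haveI : Fintype Kr := Fintype.ofFinite _
  have cardW : Nat.card W = Fintype.card L ^ Module.finrank L W := by
    rw [Nat.card_eq_fintype_card]; exact card_eq_pow_finrank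
  have cardKr : Nat.card Kr = Fintype.card L ^ Module.finrank L Kr := by
    rw [Nat.card_eq_fintype_card]; exact card_eq_pow_finrank
  -- put everything together
  have htcard : t.card = C1.ncard * C2.ncard := by
    rw [ht, Finset.card_product, Set.ncard_eq_toFinset_card C1 hC1,
      Set.ncard_eq_toFinset_card C2 hC2]
  calc C1.ncard * C2.ncard = t.card := htcard.symm
    _ ≤ Nat.card Kr * (t.image Θ).card := hcount
    _ ≤ Nat.card Kr * Nat.card W := Nat.mul_le_mul_left _ himg
    _ = Fintype.card L ^ (Module.finrank L Kr + Module.finrank L W) := by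
        rw [cardW, cardKr, pow_add]
    _ = Fintype.card L ^ 3 := by rw [hsum]
    _ = Fintype.card K ^ (3 * m) := by
        rw [hL, ← pow_mul, Nat.mul_comm]
end

section
/- Let q be a prime power and m, m' ≥ 1. If C = C₁ × ⋯ × Cₙ is an unambiguous m-code and C' = C'₁ × ⋯ × C'ₙ is an unambiguous m'-code for the same q-LMUC (with 𝔽_q-matrix transfer blocks F_{i,j}), then there is an unambiguous (m+m')-code D = D₁ × ⋯ × Dₙ with |D_i| = |C_i| · |C'_i| for all i. Consequently the rate regions satisfy R_{m+m'} ⊇ (m·R_m + m'·R_{m'})/(m+m'). -/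
/-- An external code `C` over the extension field `E` is unambiguous for the q-LMUC
with 𝔽_q-blocks `F`: distinct codewords of each user have disjoint fan-out sets. -/
def UnambE {K : Type*} [Field K] {n : ℕ} {s t : Fin n → ℕ}
    (E : Type*) [Field E] [Algebra K E]
    (F : ∀ i j : Fin n, Matrix (Fin (s i)) (Fin (t j)) K)
    (C : ∀ i, Set (Fin (s i) → E)) : Prop :=
  ∀ i : Fin n, ∀ x ∈ C i, ∀ x' ∈ C i, x ≠ x' →
    Disjoint
      {w : Fin (t i) → E | ∃ c : ∀ k, Fin (s k) → E, (∀ k, k ≠ i → c k ∈ C k) ∧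
        w = Matrix.vecMul x ((F i i).map (algebraMap K E)) +
          ∑ k ∈ Finset.univ.erase i,
            Matrix.vecMul (c k) ((F k i).map (algebraMap K E))}
      {w : Fin (t i) → E | ∃ c : ∀ k, Fin (s k) → E, (∀ k, k ≠ i → c k ∈ C k) ∧
        w = Matrix.vecMul x' ((F i i).map (algebraMap K E)) +
          ∑ k ∈ Finset.univ.erase i,
            Matrix.vecMul (c k) ((F k i).map (algebraMap K E))}

/-- Applying a `K`-linear map entrywise commutes with `vecMul` by a `K`-matrix. -/
lemma vecMul_linmap {K : Type*} [Field K] {L L' : Type*} [Field L] [Algebra K L]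
    [Field L'] [Algebra K L'] (φ : L →ₗ[K] L') {a b : ℕ}
    (x : Fin a → L) (M : Matrix (Fin a) (Fin b) K) :
    (fun j => φ (Matrix.vecMul x (M.map (algebraMap K L)) j)) =
      Matrix.vecMul (fun k => φ (x k)) (M.map (algebraMap K L')) := by
  funext j
  simp only [Matrix.vecMul, dotProduct, Matrix.map_apply]
  rw [map_sum]
  refine Finset.sum_congr rfl fun k _ => ?_
  rw [mul_comm, ← Algebra.smul_def, map_smul, Algebra.smul_def, mul_comm]

/-- from an unambiguous `m`-code `C` (over `𝔽_{q^m}`) and an unambiguous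
`m'`-code `C'` (over `𝔽_{q^{m'}}`) for the same q-LMUC, one obtains an unambiguous
`(m+m')`-code `D` (over `𝔽_{q^{m+m'}}`) with `|D_i| = |C_i| · |C'_i|` for all `i`. -/
theorem stmt18 {p e : ℕ} (hp : p.Prime) (he : 0 < e)
    {K : Type*} [Field K] [Fintype K] (hq : Fintype.card K = p ^ e)
    {L1 L2 L3 : Type*}
    [Field L1] [Fintype L1] [Algebra K L1]
    [Field L2] [Fintype L2] [Algebra K L2]
    [Field L3] [Fintype L3] [Algebra K L3]
    {m m' : ℕ} (hm : 0 < m) (hm' : 0 < m')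
    (hL1 : Fintype.card L1 = Fintype.card K ^ m)
    (hL2 : Fintype.card L2 = Fintype.card K ^ m')
    (hL3 : Fintype.card L3 = Fintype.card K ^ (m + m'))
    {n : ℕ} {s t : Fin n → ℕ}
    (F : ∀ i j : Fin n, Matrix (Fin (s i)) (Fin (t j)) K)
    (C : ∀ i, Set (Fin (s i) → L1)) (C' : ∀ i, Set (Fin (s i) → L2))
    (hC : UnambE L1 F C) (hC' : UnambE L2 F C') :
    ∃ D : ∀ i, Set (Fin (s i) → L3), UnambE L3 F D ∧
      ∀ i, (D i).ncard = (C i).ncard * (C' i).ncard := by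
  -- `L3 ≃ₗ[K] L1 × L2` as `K`-vector spaces
  have hq1 : 1 < Fintype.card K := Fintype.one_lt_card
  have hr1 : Module.finrank K L1 = m := by
    have := Module.card_eq_pow_finrank (K := K) (V := L1)
    rw [hL1] at this
    exact (Nat.pow_right_injective hq1 this.symm)
  have hr2 : Module.finrank K L2 = m' := by
    have := Module.card_eq_pow_finrank (K := K) (V := L2)
    rw [hL2] at this
    exact (Nat.pow_right_injective hq1 this.symm)
  have hr3 : Module.finrank K L3 = m + m' := by
    have := Module.card_eq_pow_finrank (K := K) (V := L3)
    rw [hL3] at this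
    exact (Nat.pow_right_injective hq1 this.symm)
  have hfr : Module.finrank K L3 = Module.finrank K (L1 × L2) := by
    rw [Module.finrank_prod, hr1, hr2, hr3]
  obtain ⟨φ⟩ := FiniteDimensional.nonempty_linearEquiv_of_finrank_eq hfr
  set φ1 : L3 →ₗ[K] L1 := (LinearMap.fst K L1 L2).comp φ.toLinearMap with hφ1
  set φ2 : L3 →ₗ[K] L2 := (LinearMap.snd K L1 L2).comp φ.toLinearMap with hφ2
  set ψ : ∀ i, ((Fin (s i) → L1) × (Fin (s i) → L2)) → (Fin (s i) → L3) :=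
    fun i pq => fun j => φ.symm (pq.1 j, pq.2 j) with hψ
  have hψinj : ∀ i, Function.Injective (ψ i) := by
    intro i pq pq' h
    have : ∀ j, (pq.1 j, pq.2 j) = (pq'.1 j, pq'.2 j) := by
      intro j
      have := congrFun h j
      exact φ.symm.injective this
    refine Prod.ext (funext fun j => congrArg Prod.fst (this j))
      (funext fun j => congrArg Prod.snd (this j))
  refine ⟨fun i => ψ i '' (C i ×ˢ C' i), ?_, ?_⟩
  · -- unambiguity
    intro i x hx x' hx' hne
    obtain ⟨⟨p, p'⟩, ⟨hp1, hp2⟩, rfl⟩ := hx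
    obtain ⟨⟨r, r'⟩, ⟨hr1', hr2'⟩, rfl⟩ := hx'
    rw [Set.disjoint_left]
    rintro w ⟨c, hc, rfl⟩ ⟨d, hd, hw⟩
    -- extract the L1/L2 components of the interfering codewords
    have hmem : ∀ k, k ≠ i → ((fun j => φ1 (c k j)) ∈ C k ∧ (fun j => φ2 (c k j)) ∈ C' k)
        ∧ ((fun j => φ1 (d k j)) ∈ C k ∧ (fun j => φ2 (d k j)) ∈ C' k) := by
      intro k hk
      obtain ⟨⟨a, b⟩, ⟨ha, hb⟩, hab⟩ := hc k hk
      obtain ⟨⟨a', b'⟩, ⟨ha', hb'⟩, hab'⟩ := hd k hk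
      constructor <;> constructor
      · convert ha using 1; funext j
        rw [← hab]; simp [ψ, φ1]
      · convert hb using 1; funext j
        rw [← hab]; simp [ψ, φ2]
      · convert ha' using 1; funext j
        rw [← hab']; simp [ψ, φ1]
      · convert hb' using 1; funext j
        rw [← hab']; simp [ψ, φ2]
    have hproj : ∀ (θ : L3 →ₗ[K] L1) (y : Fin (s i) → L3) (cc : ∀ k, Fin (s k) → L3),
        (fun j => θ ((Matrix.vecMul y ((F i i).map (algebraMap K L3)) +
          ∑ k ∈ Finset.univ.erase i,
            Matrix.vecMul (cc k) ((F k i).map (algebraMap K L3))) j)) =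
        Matrix.vecMul (fun j => θ (y j)) ((F i i).map (algebraMap K L1)) +
          ∑ k ∈ Finset.univ.erase i,
            Matrix.vecMul (fun j => θ (cc k j)) ((F k i).map (algebraMap K L1)) := by
      intro θ y cc
      funext j
      simp only [Pi.add_apply, map_add, Finset.sum_apply, map_sum]
      congr 1
      · exact congrFun (vecMul_linmap θ y (F i i)) j
      · refine Finset.sum_congr rfl fun k _ => ?_
        exact congrFun (vecMul_linmap θ (cc k) (F k i)) j
    have hproj2 : ∀ (θ : L3 →ₗ[K] L2) (y : Fin (s i) → L3) (cc : ∀ k, Fin (s k) → L3),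
        (fun j => θ ((Matrix.vecMul y ((F i i).map (algebraMap K L3)) +
          ∑ k ∈ Finset.univ.erase i,
            Matrix.vecMul (cc k) ((F k i).map (algebraMap K L3))) j)) =
        Matrix.vecMul (fun j => θ (y j)) ((F i i).map (algebraMap K L2)) +
          ∑ k ∈ Finset.univ.erase i,
            Matrix.vecMul (fun j => θ (cc k j)) ((F k i).map (algebraMap K L2)) := by
      intro θ y cc
      funext j
      simp only [Pi.add_apply, map_add, Finset.sum_apply, map_sum]
      congr 1
      · exact congrFun (vecMul_linmap θ y (F i i)) j
      · refine Finset.sum_congr rfl fun k _ => ?_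
        exact congrFun (vecMul_linmap θ (cc k) (F k i)) j
    have hx1 : (fun j => φ1 (ψ i (p, p') j)) = p := by
      funext j; simp [ψ, φ1]
    have hx1' : (fun j => φ1 (ψ i (r, r') j)) = r := by
      funext j; simp [ψ, φ1]
    have hx2 : (fun j => φ2 (ψ i (p, p') j)) = p' := by
      funext j; simp [ψ, φ2]
    have hx2' : (fun j => φ2 (ψ i (r, r') j)) = r' := by
      funext j; simp [ψ, φ2]
    by_cases h1 : p = r
    · -- then p' ≠ r'; use hC'
      have h2 : p' ≠ r' := by
        rintro rfl
        exact hne (by rw [h1])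
      set w2 : Fin (t i) → L2 := fun j => φ2
        ((Matrix.vecMul (ψ i (p, p')) ((F i i).map (algebraMap K L3)) +
          ∑ k ∈ Finset.univ.erase i,
            Matrix.vecMul (c k) ((F k i).map (algebraMap K L3))) j) with hw2def
      have hmem1 : w2 ∈ {w : Fin (t i) → L2 | ∃ cc : ∀ k, Fin (s k) → L2,
          (∀ k, k ≠ i → cc k ∈ C' k) ∧
          w = Matrix.vecMul p' ((F i i).map (algebraMap K L2)) +
            ∑ k ∈ Finset.univ.erase i,
              Matrix.vecMul (cc k) ((F k i).map (algebraMap K L2))} := by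
        exact ⟨fun k => fun j => φ2 (c k j), fun k hk => ((hmem k hk).1).2,
          by rw [hw2def, hproj2 φ2 _ c, hx2]⟩
      have hmem2 : w2 ∈ {w : Fin (t i) → L2 | ∃ cc : ∀ k, Fin (s k) → L2,
          (∀ k, k ≠ i → cc k ∈ C' k) ∧
          w = Matrix.vecMul r' ((F i i).map (algebraMap K L2)) +
            ∑ k ∈ Finset.univ.erase i,
              Matrix.vecMul (cc k) ((F k i).map (algebraMap K L2))} := by
        refine ⟨fun k => fun j => φ2 (d k j), fun k hk => ((hmem k hk).2).2, ?_⟩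
        rw [hw2def]
        rw [show (fun j => φ2
          ((Matrix.vecMul (ψ i (p, p')) ((F i i).map (algebraMap K L3)) +
          ∑ k ∈ Finset.univ.erase i,
            Matrix.vecMul (c k) ((F k i).map (algebraMap K L3))) j)) = fun j => φ2
          ((Matrix.vecMul (ψ i (r, r')) ((F i i).map (algebraMap K L3)) +
          ∑ k ∈ Finset.univ.erase i,
            Matrix.vecMul (d k) ((F k i).map (algebraMap K L3))) j) from by rw [hw]]
        rw [hproj2 φ2 _ d, hx2']
      exact Set.disjoint_left.mp (hC' i p' hp2 r' hr2' h2) hmem1 hmem2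
    · set w1 : Fin (t i) → L1 := fun j => φ1
        ((Matrix.vecMul (ψ i (p, p')) ((F i i).map (algebraMap K L3)) +
          ∑ k ∈ Finset.univ.erase i,
            Matrix.vecMul (c k) ((F k i).map (algebraMap K L3))) j) with hw1def
      have hmem1 : w1 ∈ {w : Fin (t i) → L1 | ∃ cc : ∀ k, Fin (s k) → L1,
          (∀ k, k ≠ i → cc k ∈ C k) ∧
          w = Matrix.vecMul p ((F i i).map (algebraMap K L1)) +
            ∑ k ∈ Finset.univ.erase i,
              Matrix.vecMul (cc k) ((F k i).map (algebraMap K L1))} := by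
        exact ⟨fun k => fun j => φ1 (c k j), fun k hk => ((hmem k hk).1).1,
          by rw [hw1def, hproj φ1 _ c, hx1]⟩
      have hmem2 : w1 ∈ {w : Fin (t i) → L1 | ∃ cc : ∀ k, Fin (s k) → L1,
          (∀ k, k ≠ i → cc k ∈ C k) ∧
          w = Matrix.vecMul r ((F i i).map (algebraMap K L1)) +
            ∑ k ∈ Finset.univ.erase i,
              Matrix.vecMul (cc k) ((F k i).map (algebraMap K L1))} := by
        refine ⟨fun k => fun j => φ1 (d k j), fun k hk => ((hmem k hk).2).1, ?_⟩
        rw [hw1def]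
        rw [show (fun j => φ1
          ((Matrix.vecMul (ψ i (p, p')) ((F i i).map (algebraMap K L3)) +
          ∑ k ∈ Finset.univ.erase i,
            Matrix.vecMul (c k) ((F k i).map (algebraMap K L3))) j)) = fun j => φ1
          ((Matrix.vecMul (ψ i (r, r')) ((F i i).map (algebraMap K L3)) +
          ∑ k ∈ Finset.univ.erase i,
            Matrix.vecMul (d k) ((F k i).map (algebraMap K L3))) j) from by rw [hw]]
        rw [hproj φ1 _ d, hx1']
      exact Set.disjoint_left.mp (hC i p hp1 r hr1' h1) hmem1 hmem2
  · -- cardinality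
    intro i
    rw [Set.ncard_image_of_injective _ (hψinj i)]
    rw [← Nat.card_coe_set_eq, ← Nat.card_coe_set_eq, ← Nat.card_coe_set_eq]
    rw [Nat.card_congr (Equiv.Set.prod (C i) (C' i)), Nat.card_prod]
end
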